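/- Let K, c, C > 0 and suppose G : ℝ_+^{n+2} → [0,∞) satisfies, for all (x,t) ∈ ℝ^{n+1}: G(x,t)² ≤ ∑_{j=0}^∞ e^{-c4^j} sup_{λ>0} ∫_{λ/2}^λ (1/|2^{j+1}Q_λ(x) × 4^{j+2}I_λ(t)|) ∬_{2^{j+1}Q_λ(x)×4^{j+2}I_λ(t)} |H(σ,z,τ)|² dz dτ dσ/σ, where Q_λ(x) = B(x,λ), I_λ(t) = (t-λ²,t+λ²), and H : ℝ_+^{n+2} → ℝ is measurable with ∭_{ℝ_+^{n+2}} |H(σ,z,τ)|² dz dτ dσ/σ ≤ K. Then ∬_{ℝ^{n+1}} G(x,t)² dx dt ≤ C' K with C' depending only on n and c. -/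

import Mathlib

open MeasureTheory Set ENNReal

/-- The dilated region `2^{j+1}Q_λ(x) × 4^{j+2}I_λ(t)`. -/
def dilReg {n : ℕ} (j : ℕ) (lam : ℝ) (p : (Fin n → ℝ) × ℝ) :
    Set ((Fin n → ℝ) × ℝ) :=
  Metric.ball p.1 (2 ^ (j + 1) * lam) ×ˢ
    Ioo (p.2 - 4 ^ (j + 2) * lam ^ 2) (p.2 + 4 ^ (j + 2) * lam ^ 2)

/-!
For `2 ^ k ≤ λ < 2 ^ (k + 1)` the region `dilReg j λ p` lies in a fixed enlargement of the cell
containing `p` of the grid whose mesh is given by the radii of `dilReg j (2 ^ (k + 1))`, and its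
volume is at least that of `dilReg j (2 ^ k)`. Hence the supremum over `λ` is bounded by a sum over
`k` of averages that are constant on grid cells. Integrating such a function in `p` is a sum over
cells, and since the enlarged cells overlap a bounded number of times (a volume packing argument),
the result is at most a constant times the integral of `|H|²` over the window
`σ ∈ (2 ^ (k - 1), 2 ^ (k + 1))`. These windows cover `(0, ∞)` twice, and `∑ e^{-c 4^j} < ∞`.

Working on grids makes every exchange of a sum and an integral a countable superadditivity
`∑ ∫ ≤ ∫ ∑`, which holds for arbitrary, possibly non-measurable, integrands.
-/

open scoped Function

theorem MeasureTheory.tsum_lintegral_le_lintegral_tsum {α ι : Type*} [MeasurableSpace α]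
    {μ : Measure α} [Countable ι] (f : ι → α → ℝ≥0∞) :
    ∑' i, ∫⁻ a, f i a ∂μ ≤ ∫⁻ a, ∑' i, f i a ∂μ := by
  choose g hgm hgf hg using fun i => exists_measurable_le_lintegral_eq μ (f i)
  calc ∑' i, ∫⁻ a, f i a ∂μ = ∫⁻ a, ∑' i, g i a ∂μ := by
        rw [lintegral_tsum fun i => (hgm i).aemeasurable]
        exact tsum_congr hg
    _ ≤ ∫⁻ a, ∑' i, f i a ∂μ := lintegral_mono fun a => ENNReal.tsum_le_tsum fun i => hgf i a

theorem MeasureTheory.lintegral_comp_eq_tsum {α β : Type*} [MeasurableSpace α] [MeasurableSpace β]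
    [Countable β] [MeasurableSingletonClass β] {μ : Measure α} {φ : α → β} (hφ : Measurable φ)
    (g : β → ℝ≥0∞) : ∫⁻ a, g (φ a) ∂μ = ∑' b, g b * μ (φ ⁻¹' {b}) := by
  rw [← lintegral_map (measurable_of_countable g) hφ, lintegral_countable']
  simp_rw [Measure.map_apply hφ (measurableSet_singleton _)]

theorem MeasureTheory.tsum_measure_mul_setLIntegral_le {α ι : Type*} [MeasurableSpace α]
    {μ : Measure α} [Countable ι] {C N : ι → Set α} {D : α → Set α}
    (hC : ∀ i, MeasurableSet (C i)) (hCd : Pairwise (Disjoint on C))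
    (hN : ∀ i, MeasurableSet (N i)) (hD : ∀ a, MeasurableSet (D a))
    (hCD : ∀ i a, a ∈ N i → C i ⊆ D a) (f : α → ℝ≥0∞) :
    ∑' i, μ (C i) * ∫⁻ a in N i, f a ∂μ ≤ ∫⁻ a, μ (D a) * f a ∂μ := by
  -- packing: the disjoint cells `C i` with `a ∈ N i` all lie in `D a`
  have hcount : ∀ a, ∑' i, μ (C i) * (N i).indicator f a ≤ μ (D a) * f a := fun a =>
    calc ∑' i, μ (C i) * (N i).indicator f a ≤ ∑' i, μ (C i ∩ D a) * f a := by
          refine ENNReal.tsum_le_tsum fun i => ?_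
          by_cases ha : a ∈ N i
          · rw [indicator_of_mem ha, inter_eq_left.2 (hCD i a ha)]
          · simp [indicator_of_notMem ha]
      _ = μ (⋃ i, C i ∩ D a) * f a := by
          rw [ENNReal.tsum_mul_right, measure_iUnion
            (hCd.mono fun _ _ h => h.mono inter_subset_left inter_subset_left)
            fun i => (hC i).inter (hD a)]
      _ ≤ μ (D a) * f a := by gcongr; exact iUnion_subset fun i => inter_subset_right
  calc ∑' i, μ (C i) * ∫⁻ a in N i, f a ∂μ
      ≤ ∑' i, ∫⁻ a, μ (C i) * (N i).indicator f a ∂μ := ENNReal.tsum_le_tsum fun i => by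
        rw [← lintegral_indicator (hN i)]
        exact lintegral_const_mul_le _ _
    _ ≤ ∫⁻ a, ∑' i, μ (C i) * (N i).indicator f a ∂μ := tsum_lintegral_le_lintegral_tsum _
    _ ≤ ∫⁻ a, μ (D a) * f a ∂μ := lintegral_mono hcount

theorem pairwise_disjoint_Ico_zpow_of_one_lt {K : Type*} [Field K] [LinearOrder K]
    [IsStrictOrderedRing K] {b : K} (hb : 1 < b) :
    Pairwise (Disjoint on fun k : ℤ => Ico (b ^ k) (b ^ (k + 1))) := by
  intro m k hmk
  rw [Function.onFun, Set.disjoint_left]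
  rintro x ⟨h1, h2⟩ ⟨h3, h4⟩
  have := (zpow_lt_zpow_iff_right₀ hb).1 (h1.trans_lt h4)
  have := (zpow_lt_zpow_iff_right₀ hb).1 (h3.trans_lt h2)
  omega

theorem tsum_setLIntegral_Ioo_two_zpow_le (u : ℝ → ℝ≥0∞) :
    ∑' k : ℤ, ∫⁻ σ in Ioo ((2 : ℝ) ^ k / 2) (2 * 2 ^ k), u σ ≤ 2 * ∫⁻ σ in Ioi 0, u σ := by
  set a : ℤ → ℝ≥0∞ := fun k => ∫⁻ σ in Ico ((2 : ℝ) ^ k) (2 ^ (k + 1)), u σ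
  have hsplit : ∀ k : ℤ, ∫⁻ σ in Ioo ((2 : ℝ) ^ k / 2) (2 * 2 ^ k), u σ ≤ a (k - 1) + a k := by
    intro k
    refine (lintegral_mono_set ?_).trans (lintegral_union_le _ _ _)
    rw [sub_add_cancel, zpow_sub_one₀ two_ne_zero, zpow_add_one₀ two_ne_zero, ← div_eq_mul_inv]
    rintro σ ⟨h₁, h₂⟩
    rcases lt_or_ge σ (2 ^ k) with h | h
    · exact Or.inl ⟨h₁.le, h⟩
    · exact Or.inr ⟨h, by linarith⟩
  have hsum : ∑' k, a k ≤ ∫⁻ σ in Ioi 0, u σ := by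
    rw [← lintegral_iUnion (fun k => measurableSet_Ico)
      (pairwise_disjoint_Ico_zpow_of_one_lt one_lt_two)]
    exact lintegral_mono_set (iUnion_subset fun k σ hσ => (zpow_pos two_pos k).trans_le hσ.1)
  calc ∑' k : ℤ, ∫⁻ σ in Ioo ((2 : ℝ) ^ k / 2) (2 * 2 ^ k), u σ
      ≤ ∑' k, (a (k - 1) + a k) := ENNReal.tsum_le_tsum hsplit
    _ = ∑' k, a k + ∑' k, a k := by
        rw [ENNReal.tsum_add]
        congr 1
        exact (Equiv.subRight 1).tsum_eq a
    _ ≤ 2 * ∫⁻ σ in Ioi 0, u σ := by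
        rw [← two_mul]
        gcongr

namespace ParabolicAveraging

section Box

variable {ι : Type*} [Fintype ι] {p q : (ι → ℝ) × ℝ} {r s a b : ℝ}

def box (p : (ι → ℝ) × ℝ) (r s : ℝ) : Set ((ι → ℝ) × ℝ) :=
  Metric.ball p.1 r ×ˢ Metric.ball p.2 s

theorem measurableSet_box : MeasurableSet (box p r s) :=
  measurableSet_ball.prod measurableSet_ball

theorem mem_box_comm : q ∈ box p r s ↔ p ∈ box q r s := by
  simp only [box, mem_prod, Metric.mem_ball_comm]

theorem box_mono {r' s' : ℝ} (hr : r ≤ r') (hs : s ≤ s') : box p r s ⊆ box p r' s' :=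
  prod_mono (Metric.ball_subset_ball hr) (Metric.ball_subset_ball hs)

theorem box_subset_box_of_mem (hq : q ∈ box p a b) : box q r s ⊆ box p (r + a) (s + b) :=
  prod_mono (Metric.ball_subset_ball' (by linarith [Metric.mem_ball.1 hq.1]))
    (Metric.ball_subset_ball' (by linarith [Metric.mem_ball.1 hq.2]))

theorem volume_box (p : (ι → ℝ) × ℝ) (hr : 0 < r) :
    volume (box p r s) = ENNReal.ofReal ((2 * r) ^ Fintype.card ι * (2 * s)) := by
  rw [box, Measure.volume_eq_prod, Measure.prod_prod, Real.volume_pi_ball _ hr, Real.volume_ball,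
    ← ofReal_mul (by positivity)]

end Box

section Grid

variable {ι : Type*} (r s : ℝ)

noncomputable def gridIndex (p : (ι → ℝ) × ℝ) : (ι → ℤ) × ℤ := (fun i => ⌊p.1 i / r⌋, ⌊p.2 / s⌋)

def gridCorner (w : (ι → ℤ) × ℤ) : (ι → ℝ) × ℝ := (fun i => r * w.1 i, s * w.2)

theorem measurable_gridIndex : Measurable (gridIndex (ι := ι) r s) := by
  unfold gridIndex
  fun_prop

theorem dist_mul_floor_div_lt {r : ℝ} (hr : 0 < r) (x : ℝ) : dist x (r * ⌊x / r⌋) < r := by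
  have h1 := Int.floor_le (x / r)
  have h2 := Int.lt_floor_add_one (x / r)
  rw [le_div_iff₀ hr] at h1
  rw [div_lt_iff₀ hr] at h2
  rw [Real.dist_eq, abs_lt]
  constructor <;> linarith

variable [Fintype ι]

def gridNbhd (w : (ι → ℤ) × ℤ) : Set ((ι → ℝ) × ℝ) := box (gridCorner r s w) (2 * r) (2 * s)

variable {r s}

theorem mem_box_gridCorner_gridIndex (hr : 0 < r) (hs : 0 < s) (p : (ι → ℝ) × ℝ) :
    p ∈ box (gridCorner r s (gridIndex r s p)) r s :=
  ⟨(dist_pi_lt_iff hr).2 fun i => dist_mul_floor_div_lt hr (p.1 i), dist_mul_floor_div_lt hs p.2⟩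

theorem box_subset_gridNbhd (hr : 0 < r) (hs : 0 < s) (p : (ι → ℝ) × ℝ) :
    box p r s ⊆ gridNbhd r s (gridIndex r s p) := by
  rw [gridNbhd, two_mul, two_mul]
  exact box_subset_box_of_mem (mem_box_gridCorner_gridIndex hr hs p)

theorem tsum_volume_mul_setLIntegral_gridNbhd_le (hr : 0 < r) (hs : 0 < s)
    (f : (ι → ℝ) × ℝ → ℝ≥0∞) :
    ∑' w, volume (gridIndex r s ⁻¹' {w}) * ∫⁻ q in gridNbhd r s w, f q ≤
      volume (box (0 : (ι → ℝ) × ℝ) (3 * r) (3 * s)) * ∫⁻ q, f q := by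
  have hCD : ∀ (w : (ι → ℤ) × ℤ) q, q ∈ gridNbhd r s w →
      gridIndex r s ⁻¹' {w} ⊆ box q (3 * r) (3 * s) := by
    rintro w q hq p rfl
    convert box_subset_box_of_mem (mem_box_comm.1 hq) (mem_box_gridCorner_gridIndex hr hs p)
      using 2 <;> ring
  calc ∑' w, volume (gridIndex r s ⁻¹' {w}) * ∫⁻ q in gridNbhd r s w, f q
      ≤ ∫⁻ q, volume (box q (3 * r) (3 * s)) * f q :=
        tsum_measure_mul_setLIntegral_le
          (fun w => measurable_gridIndex r s (measurableSet_singleton w))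
          (fun w w' h => Disjoint.preimage _ (disjoint_singleton.2 h))
          (fun w => measurableSet_box) (fun q => measurableSet_box) hCD f
    _ = volume (box (0 : (ι → ℝ) × ℝ) (3 * r) (3 * s)) * ∫⁻ q, f q := by
        simp_rw [volume_box _ (by positivity : 0 < 3 * r)]
        exact lintegral_const_mul' _ _ ofReal_ne_top

end Grid

section Dyadic

variable {n : ℕ} (F : ℝ → (Fin n → ℝ) × ℝ → ℝ≥0∞) (j : ℕ)

noncomputable def spaceRadius (lam : ℝ) : ℝ := 2 ^ (j + 1) * lam

noncomputable def timeRadius (lam : ℝ) : ℝ := 4 ^ (j + 2) * lam ^ 2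

theorem dilReg_eq_box (lam : ℝ) (p : (Fin n → ℝ) × ℝ) :
    dilReg j lam p = box p (spaceRadius j lam) (timeRadius j lam) := by
  rw [dilReg, box, Real.ball_eq_Ioo]
  rfl

theorem volume_dilReg {lam : ℝ} (hlam : 0 < lam) (p : (Fin n → ℝ) × ℝ) :
    volume (dilReg j lam p) =
      ENNReal.ofReal ((2 * spaceRadius j lam) ^ n * (2 * timeRadius j lam)) := by
  rw [dilReg_eq_box, volume_box _ (by unfold spaceRadius; positivity), Fintype.card_fin]

noncomputable def scaleAverage (lam : ℝ) (p : (Fin n → ℝ) × ℝ) : ℝ≥0∞ :=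
  ∫⁻ σ in Ioo (lam / 2) lam,
    ((volume (dilReg j lam p))⁻¹ * ∫⁻ q in dilReg j lam p, F σ q) * ENNReal.ofReal σ⁻¹

/-- Normalised by the volume of the smallest of the regions `dilReg j λ`, `lam ≤ λ ≤ 2 * lam`,
with a σ-window containing all of theirs. -/
noncomputable def cellAverage (lam : ℝ) (w : (Fin n → ℤ) × ℤ) : ℝ≥0∞ :=
  ∫⁻ σ in Ioo (lam / 2) (2 * lam),
    ((volume (dilReg j lam (0 : (Fin n → ℝ) × ℝ)))⁻¹ *
      ∫⁻ q in gridNbhd (spaceRadius j (2 * lam)) (timeRadius j (2 * lam)) w, F σ q) *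
      ENNReal.ofReal σ⁻¹

noncomputable def gridAverage (lam : ℝ) (p : (Fin n → ℝ) × ℝ) : ℝ≥0∞ :=
  cellAverage F j lam (gridIndex (spaceRadius j (2 * lam)) (timeRadius j (2 * lam)) p)

variable {j}

theorem scaleAverage_le_gridAverage {lam₀ lam : ℝ} (hlam₀ : 0 < lam₀) (h₀ : lam₀ ≤ lam)
    (h₂ : lam ≤ 2 * lam₀) (p : (Fin n → ℝ) × ℝ) :
    scaleAverage F j lam p ≤ gridAverage F j lam₀ p := by
  have hlam : 0 < lam := hlam₀.trans_le h₀
  have hvol : volume (dilReg j lam₀ (0 : (Fin n → ℝ) × ℝ)) ≤ volume (dilReg j lam p) := by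
    rw [volume_dilReg j hlam₀, volume_dilReg j hlam]
    unfold spaceRadius timeRadius
    gcongr
  have hsub : dilReg j lam p ⊆ gridNbhd (spaceRadius j (2 * lam₀)) (timeRadius j (2 * lam₀))
      (gridIndex (spaceRadius j (2 * lam₀)) (timeRadius j (2 * lam₀)) p) := by
    rw [dilReg_eq_box]
    refine (box_mono ?_ ?_).trans (box_subset_gridNbhd ?_ ?_ p) <;>
      simp only [spaceRadius, timeRadius] <;> first | positivity | gcongr
  refine lintegral_mono' (Measure.restrict_mono (Ioo_subset_Ioo (by linarith) (by linarith))
    le_rfl) fun σ => ?_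
  gcongr

theorem measurable_gridAverage (lam : ℝ) : Measurable (gridAverage F j lam) :=
  (measurable_of_countable (cellAverage F j lam)).comp (measurable_gridIndex _ _)

theorem lintegral_gridAverage_le {lam : ℝ} (hlam : 0 < lam) :
    ∫⁻ p, gridAverage F j lam p ≤
      6 ^ n * 12 * ∫⁻ σ in Ioo (lam / 2) (2 * lam), (∫⁻ q, F σ q) * ENNReal.ofReal σ⁻¹ := by
  set r := spaceRadius j (2 * lam)
  set s := timeRadius j (2 * lam)
  have hr : 0 < r := by unfold r spaceRadius; positivity
  have hs : 0 < s := by unfold s timeRadius; positivity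
  set V := volume (dilReg j lam (0 : (Fin n → ℝ) × ℝ))
  have hconst : V⁻¹ * volume (box (0 : (Fin n → ℝ) × ℝ) (3 * r) (3 * s)) = 6 ^ n * 12 := by
    have hV : V = ENNReal.ofReal ((2 * spaceRadius j lam) ^ n * (2 * timeRadius j lam)) :=
      volume_dilReg j hlam 0
    have hV0 : V ≠ 0 := by
      rw [hV, Ne, ENNReal.ofReal_eq_zero, not_le]
      unfold spaceRadius timeRadius
      positivity
    rw [volume_box _ (by positivity), Fintype.card_fin,
      show 2 * (3 * r) = 6 * (2 * spaceRadius j lam) by unfold r spaceRadius; ring,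
      show 2 * (3 * s) = 12 * (2 * timeRadius j lam) by unfold s timeRadius; ring, mul_pow,
      show 6 ^ n * (2 * spaceRadius j lam) ^ n * (12 * (2 * timeRadius j lam)) =
        (6 ^ n * 12) * ((2 * spaceRadius j lam) ^ n * (2 * timeRadius j lam)) by ring,
      ENNReal.ofReal_mul (by positivity), ← hV, mul_comm, mul_assoc,
      ENNReal.mul_inv_cancel hV0 (by rw [hV]; exact ofReal_ne_top), mul_one]
    norm_num
  calc ∫⁻ p, gridAverage F j lam p
      = ∑' w, cellAverage F j lam w * volume (gridIndex r s ⁻¹' {w}) :=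
        lintegral_comp_eq_tsum (measurable_gridIndex r s) _
    _ ≤ ∑' w, ∫⁻ σ in Ioo (lam / 2) (2 * lam), volume (gridIndex r s ⁻¹' {w}) *
          ((V⁻¹ * ∫⁻ q in gridNbhd r s w, F σ q) * ENNReal.ofReal σ⁻¹) :=
        ENNReal.tsum_le_tsum fun w => by
          rw [mul_comm]
          exact lintegral_const_mul_le _ _
    _ ≤ ∫⁻ σ in Ioo (lam / 2) (2 * lam), ∑' w, volume (gridIndex r s ⁻¹' {w}) *
          ((V⁻¹ * ∫⁻ q in gridNbhd r s w, F σ q) * ENNReal.ofReal σ⁻¹) :=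
        tsum_lintegral_le_lintegral_tsum _
    _ = ∫⁻ σ in Ioo (lam / 2) (2 * lam), V⁻¹ * ENNReal.ofReal σ⁻¹ *
          ∑' w, volume (gridIndex r s ⁻¹' {w}) * ∫⁻ q in gridNbhd r s w, F σ q := by
        congr 1 with σ
        rw [← ENNReal.tsum_mul_left]
        exact tsum_congr fun w => by ring
    _ ≤ ∫⁻ σ in Ioo (lam / 2) (2 * lam), V⁻¹ * ENNReal.ofReal σ⁻¹ *
          (volume (box (0 : (Fin n → ℝ) × ℝ) (3 * r) (3 * s)) * ∫⁻ q, F σ q) :=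
        lintegral_mono fun σ => by
          gcongr
          exact tsum_volume_mul_setLIntegral_gridNbhd_le hr hs _
    _ = 6 ^ n * 12 * ∫⁻ σ in Ioo (lam / 2) (2 * lam), (∫⁻ q, F σ q) * ENNReal.ofReal σ⁻¹ := by
        rw [← lintegral_const_mul' _ _ (by finiteness), ← hconst]
        congr 1 with σ
        ring

theorem iSup_scaleAverage_le_tsum_gridAverage (p : (Fin n → ℝ) × ℝ) :
    ⨆ lam : {l : ℝ // 0 < l}, scaleAverage F j lam.1 p ≤ ∑' k : ℤ, gridAverage F j (2 ^ k) p := by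
  refine iSup_le fun ⟨lam, hlam⟩ => ?_
  have h₀ : (2 : ℝ) ^ Int.log 2 lam ≤ lam := by
    simpa using Int.zpow_log_le_self (b := 2) one_lt_two hlam
  have h₂ : lam < 2 * 2 ^ Int.log 2 lam := by
    simpa [zpow_add_one₀, mul_comm] using Int.lt_zpow_succ_log_self (b := 2) one_lt_two lam
  exact (scaleAverage_le_gridAverage F (zpow_pos two_pos _) h₀ h₂.le p).trans (ENNReal.le_tsum _)

theorem lintegral_le_of_le_tsum_iSup_scaleAverage {g : (Fin n → ℝ) × ℝ → ℝ≥0∞} {a : ℕ → ℝ≥0∞}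
    {K : ℝ≥0∞} (hg : ∀ p, g p ≤ ∑' j, a j * ⨆ lam : {l : ℝ // 0 < l}, scaleAverage F j lam.1 p)
    (hK : ∫⁻ σ in Ioi 0, (∫⁻ q, F σ q) * ENNReal.ofReal σ⁻¹ ≤ K) :
    ∫⁻ p, g p ≤ (∑' j, a j) * (24 * 6 ^ n) * K := by
  have hj : ∀ j, ∑' k : ℤ, ∫⁻ p, gridAverage F j (2 ^ k) p ≤ 24 * 6 ^ n * K := fun j =>
    calc ∑' k : ℤ, ∫⁻ p, gridAverage F j (2 ^ k) p
        ≤ ∑' k : ℤ, 6 ^ n * 12 * ∫⁻ σ in Ioo ((2 : ℝ) ^ k / 2) (2 * 2 ^ k),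
            (∫⁻ q, F σ q) * ENNReal.ofReal σ⁻¹ :=
          ENNReal.tsum_le_tsum fun k => lintegral_gridAverage_le F (zpow_pos two_pos k)
      _ ≤ 6 ^ n * 12 * (2 * K) := by
          rw [ENNReal.tsum_mul_left]
          gcongr
          exact (tsum_setLIntegral_Ioo_two_zpow_le _).trans (by gcongr)
      _ = 24 * 6 ^ n * K := by ring
  have hmeas : ∀ j (k : ℤ), Measurable (gridAverage F j (2 ^ k)) := fun j k =>
    measurable_gridAverage F _
  calc ∫⁻ p, g p ≤ ∫⁻ p, ∑' j, a j * ∑' k : ℤ, gridAverage F j (2 ^ k) p :=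
        lintegral_mono fun p => (hg p).trans <| ENNReal.tsum_le_tsum fun j => by
          gcongr
          exact iSup_scaleAverage_le_tsum_gridAverage F p
    _ = ∑' j, a j * ∑' k : ℤ, ∫⁻ p, gridAverage F j (2 ^ k) p := by
        rw [lintegral_tsum fun j =>
          ((Measurable.tsum (hmeas j)).const_mul _).aemeasurable]
        congr 1 with j
        rw [lintegral_const_mul _ (Measurable.tsum (hmeas j)),
          lintegral_tsum fun k => (hmeas j k).aemeasurable]
    _ ≤ ∑' j, a j * (24 * 6 ^ n * K) := ENNReal.tsum_le_tsum fun j => by gcongr; exact hj j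
    _ = (∑' j, a j) * (24 * 6 ^ n) * K := by rw [ENNReal.tsum_mul_right]; ring

end Dyadic

theorem tsum_ofReal_exp_neg_mul_four_pow_ne_top {c : ℝ} (hc : 0 < c) :
    ∑' j : ℕ, ENNReal.ofReal (Real.exp (-c * 4 ^ j)) ≠ ∞ := by
  have hterm : ∀ j : ℕ,
      ENNReal.ofReal (Real.exp (-c * 4 ^ j)) ≤ ENNReal.ofReal (Real.exp (-c)) ^ j := fun j => by
    rw [← ENNReal.ofReal_pow (Real.exp_nonneg _), ← Real.exp_nat_mul]
    refine ENNReal.ofReal_le_ofReal (Real.exp_le_exp.2 ?_)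
    have : (j : ℝ) ≤ 4 ^ j := by exact_mod_cast (Nat.lt_pow_self (by norm_num)).le
    nlinarith
  refine ne_top_of_le_ne_top ?_ (ENNReal.tsum_le_tsum hterm)
  rw [ENNReal.tsum_geometric, ENNReal.inv_ne_top]
  exact (tsub_pos_of_lt (ENNReal.ofReal_lt_one.2 (Real.exp_lt_one_iff.2 (by linarith)))).ne'

end ParabolicAveraging

/-- the Tonelli-type averaging argument: a pointwise bound of `G²`
by weighted dyadic averages of a square function `H` with
`∭ |H|² dz dτ dσ/σ ≤ K` gives `∬ G² ≤ C'K` with `C' = C'(n,c)`. -/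
theorem stmt17 (n : ℕ) (c : ℝ) (hc : 0 < c) :
    ∃ C' : ℝ, 0 < C' ∧
      ∀ (G : (Fin n → ℝ) × ℝ → ℝ)
        (H : ℝ → (Fin n → ℝ) × ℝ → ℝ) (K : ℝ≥0∞),
      (∀ p : (Fin n → ℝ) × ℝ, ENNReal.ofReal ((G p) ^ 2) ≤
        ∑' j : ℕ, ENNReal.ofReal (Real.exp (-c * 4 ^ j)) *
          ⨆ lam : {l : ℝ // 0 < l},
            ∫⁻ σ in Ioo (lam.1 / 2) lam.1,
              ((volume (dilReg j lam.1 p))⁻¹ *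
                ∫⁻ q in dilReg j lam.1 p, ENNReal.ofReal ((H σ q) ^ 2)) *
                ENNReal.ofReal σ⁻¹) →
      ((∫⁻ σ in Ioi (0 : ℝ),
          (∫⁻ q : (Fin n → ℝ) × ℝ, ENNReal.ofReal ((H σ q) ^ 2)) *
            ENNReal.ofReal σ⁻¹) ≤ K) →
      (∫⁻ p : (Fin n → ℝ) × ℝ, ENNReal.ofReal ((G p) ^ 2)) ≤
        ENNReal.ofReal C' * K := by
  set A := ∑' j : ℕ, ENNReal.ofReal (Real.exp (-c * 4 ^ j))
  have hA : A * (24 * 6 ^ n) ≠ ∞ := by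
    have := ParabolicAveraging.tsum_ofReal_exp_neg_mul_four_pow_ne_top hc
    finiteness
  refine ⟨(A * (24 * 6 ^ n)).toReal + 1, by positivity, fun G H K hG hK => ?_⟩
  calc ∫⁻ p, ENNReal.ofReal (G p ^ 2) ≤ A * (24 * 6 ^ n) * K :=
        ParabolicAveraging.lintegral_le_of_le_tsum_iSup_scaleAverage
          (fun σ q => ENNReal.ofReal (H σ q ^ 2)) hG hK
    _ ≤ ENNReal.ofReal ((A * (24 * 6 ^ n)).toReal + 1) * K := by
        rw [ENNReal.ofReal_add toReal_nonneg zero_le_one, ofReal_toReal hA]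
        gcongr
        exact le_self_add
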